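/- arXiv:1603.02605 — 3 statements merged into one kernel-verified Lean document; each statement's English description precedes it below -/
import Mathlib

section
/- Let f = l1(x1,x2)·l2(x3,x4) + l3(x1,x3)·l4(x2,x4), where l1, l2, l3, l4 are polynomials of total degree at most 1 in the indicated variables. Then l2 divides the commutator Δ_{12}(f) = (f|_{x1=0,x2=0})·(f|_{x1=1,x2=1}) − (f|_{x1=0,x2=1})·(f|_{x1=1,x2=0}). -/
open MvPolynomial

/-- Substitute the constant `a` for variable `i`. -/
noncomputable def rst {F : Type*} [Field F] (i : Fin 4) (a : F)
    (p : MvPolynomial (Fin 4) F) : MvPolynomial (Fin 4) F :=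
  aeval (fun k : Fin 4 => if k = i then (C a : MvPolynomial (Fin 4) F) else X k) p

/-- The commutator Δ₁₂ of a polynomial in F[x1,x2,x3,x4]. -/
noncomputable def comm12 {F : Type*} [Field F] (p : MvPolynomial (Fin 4) F) :
    MvPolynomial (Fin 4) F :=
  rst 1 0 (rst 0 0 p) * rst 1 1 (rst 0 1 p) - rst 1 1 (rst 0 0 p) * rst 1 0 (rst 0 1 p)

lemma rst_fix {F : Type*} [Field F] {i : Fin 4} (a : F) {p : MvPolynomial (Fin 4) F}
    (h : i ∉ p.vars) : rst i a p = p := by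
  unfold rst
  conv_rhs => rw [← aeval_X_left_apply p]
  simp only [aeval_def, ← coe_eval₂Hom]
  apply eval₂Hom_congr' rfl _ rfl
  intro k hk _
  have : k ≠ i := fun hki => h (hki ▸ hk)
  simp [this]

lemma rst_comm {F : Type*} [Field F] (a b : F) (p : MvPolynomial (Fin 4) F) :
    rst 1 b (rst 0 a p) = rst 0 a (rst 1 b p) := by
  unfold rst
  rw [comp_aeval_apply, comp_aeval_apply]
  congr 1
  have : (fun i : Fin 4 => (aeval fun k : Fin 4 =>
        if k = 1 then (C b : MvPolynomial (Fin 4) F) else X k) (if i = 0 then C a else X i))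
      = fun i : Fin 4 => (aeval fun k : Fin 4 =>
        if k = 0 then (C a : MvPolynomial (Fin 4) F) else X k) (if i = 1 then C b else X i) := by
    funext k
    fin_cases k <;> simp
  rw [this]

theorem stmt1 {F : Type*} [Field F] (l1 l2 l3 l4 : MvPolynomial (Fin 4) F)
    (h1d : l1.totalDegree ≤ 1) (h1v : l1.vars ⊆ {0, 1})
    (h2d : l2.totalDegree ≤ 1) (h2v : l2.vars ⊆ {2, 3})
    (h3d : l3.totalDegree ≤ 1) (h3v : l3.vars ⊆ {0, 2})
    (h4d : l4.totalDegree ≤ 1) (h4v : l4.vars ⊆ {1, 3}) :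
    l2 ∣ comm12 (l1 * l2 + l3 * l4) := by
  have h02 : (0 : Fin 4) ∉ l2.vars := fun h => by simpa using h2v h
  have h12 : (1 : Fin 4) ∉ l2.vars := fun h => by simpa using h2v h
  have h13 : (1 : Fin 4) ∉ l3.vars := fun h => by simpa using h3v h
  have h04 : (0 : Fin 4) ∉ l4.vars := fun h => by simpa using h4v h
  have e : ∀ a b : F, rst 1 b (rst 0 a (l1 * l2 + l3 * l4)) =
      rst 1 b (rst 0 a l1) * l2 + rst 0 a l3 * rst 1 b l4 := by
    intro a b
    simp only [rst, map_add, map_mul]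
    rw [show (aeval fun k : Fin 4 => if k = 0 then (C a : MvPolynomial (Fin 4) F) else X k) l2
        = rst 0 a l2 from rfl, rst_fix a h02]
    rw [show (aeval fun k : Fin 4 => if k = 1 then (C b : MvPolynomial (Fin 4) F) else X k) l2
        = rst 1 b l2 from rfl, rst_fix b h12]
    rw [show (aeval fun k : Fin 4 =>
          if k = 1 then (C b : MvPolynomial (Fin 4) F) else X k)
        ((aeval fun k : Fin 4 => if k = 0 then (C a : MvPolynomial (Fin 4) F) else X k) l3)
        = rst 1 b (rst 0 a l3) from rfl, rst_comm, rst_fix b h13]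
    rw [show (aeval fun k : Fin 4 => if k = 0 then (C a : MvPolynomial (Fin 4) F) else X k) l4
        = rst 0 a l4 from rfl, rst_fix a h04]
    rfl
  unfold comm12
  rw [e 0 0, e 1 1, e 0 1, e 1 0]
  exact ⟨rst 1 0 (rst 0 0 l1) * rst 1 1 (rst 0 1 l1) * l2
      - rst 1 1 (rst 0 0 l1) * rst 1 0 (rst 0 1 l1) * l2
      + rst 1 0 (rst 0 0 l1) * (rst 0 1 l3 * rst 1 1 l4)
      + rst 1 1 (rst 0 1 l1) * (rst 0 0 l3 * rst 1 0 l4)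
      - rst 1 1 (rst 0 0 l1) * (rst 0 1 l3 * rst 1 0 l4)
      - rst 1 0 (rst 0 1 l1) * (rst 0 0 l3 * rst 1 1 l4), by ring⟩
end

section
/- Over a field F, for all α, β, γ ∈ F with α ≠ 0, if δ ∈ F is a nonzero root of the quadratic Z² + ((−α²+β²+γ²)/(βγ))Z + 1 = 0 (with βγ ≠ 0), and μ = −(γ + βδ)/α is nonzero, then α(x1 − μx3)(x2 − (1/μ)x4) + β(x1 − δx2)(x3 − (1/δ)x4) = α(x1x2 + x3x4) + β(x1x3 + x2x4) + γ(x1x4 + x2x3). -/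
open MvPolynomial

theorem stmt3 {F : Type*} [Field F] (a b c d m : F)
    (ha : a ≠ 0) (hb : b ≠ 0) (hc : c ≠ 0) (hd : d ≠ 0) (hm : m ≠ 0)
    (hroot : b * c * d ^ 2 + (-a ^ 2 + b ^ 2 + c ^ 2) * d + b * c = 0)
    (hmu : m = -(c + b * d) / a) :
    C a * (X 0 - C m * X 2) * (X 1 - C (1 / m) * X 3)
      + C b * (X 0 - C d * X 1) * (X 2 - C (1 / d) * X 3)
    = C a * (X 0 * X 1 + X 2 * X 3) + C b * (X 0 * X 2 + X 1 * X 3)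
      + C c * (X 0 * X 3 + X 1 * X 2 : MvPolynomial (Fin 4) F) := by
  have h1 : a * m + b * d = -c := by
    field_simp at hmu
    linear_combination hmu
  have h2 : a * (1 / m) + b * (1 / d) = -c := by
    have h3 : a * (a * d + b * m + c * (m * d)) = 0 := by
      linear_combination (d * c + b) * h1 - hroot
    have h4 : a * d + b * m + c * (m * d) = 0 := by
      rcases mul_eq_zero.mp h3 with h | h
      · exact absurd h ha
      · exact h
    field_simp
    linear_combination h4
  have e1 : (C (a * m) + C (b * d) : MvPolynomial (Fin 4) F) = C (-c) := by
    rw [← map_add, h1]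
  have e2 : (C (a * (1 / m)) + C (b * (1 / d)) : MvPolynomial (Fin 4) F) = C (-c) := by
    rw [← map_add, h2]
  simp only [map_mul, map_neg, map_one] at e1 e2
  have e3 : (C m * C (1 / m) : MvPolynomial (Fin 4) F) = 1 := by
    rw [← map_mul, mul_one_div_cancel hm, map_one]
  have e4 : (C d * C (1 / d) : MvPolynomial (Fin 4) F) = 1 := by
    rw [← map_mul, mul_one_div_cancel hd, map_one]
  linear_combination (-(X 1 * X 2) : MvPolynomial (Fin 4) F) * e1
    - (X 0 * X 3 : MvPolynomial (Fin 4) F) * e2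
    + (C a * X 2 * X 3 : MvPolynomial (Fin 4) F) * e3
    + (C b * X 1 * X 3 : MvPolynomial (Fin 4) F) * e4
end

section
/- For even n = 2k and any α, β in a field F, one has α·S_n^n + β·S_n^{n-1} = β·Σ_{i=1}^{k-1} (x_{2i-1} + x_{2i})·∏_{m ∉ {2i-1,2i}} x_m + (βx_{2k-1} + βx_{2k} + αx_{2k-1}x_{2k})·∏_{m ∉ {2k-1,2k}} x_m, where S_n^j denotes the elementary symmetric polynomial of degree j in x1,...,xn. In particular, α·S_n^n + β·S_n^{n-1} is a sum of ⌈n/2⌉ read-once polynomials. -/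
open MvPolynomial

/-- Read-once polynomials. -/
inductive IsROP {F : Type*} [Field F] {n : ℕ} : MvPolynomial (Fin n) F → Prop
  | leaf (a b : F) (i : Fin n) : IsROP (C a * X i + C b)
  | add (a b : F) {f g : MvPolynomial (Fin n) F} (hdisj : Disjoint f.vars g.vars)
      (hf : IsROP f) (hg : IsROP g) : IsROP (C a * (f + g) + C b)
  | mul (a b : F) {f g : MvPolynomial (Fin n) F} (hdisj : Disjoint f.vars g.vars)
      (hf : IsROP f) (hg : IsROP g) : IsROP (C a * (f * g) + C b)

/-- The elementary symmetric polynomial of degree `k` in the variables `x_i`, `i : Fin n`. -/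
noncomputable def esym {F : Type*} [Field F] (n k : ℕ) : MvPolynomial (Fin n) F :=
  ∑ A ∈ Finset.univ.powersetCard k, ∏ i ∈ A, X i

/-!
Since `S_n^n = ∏ x_m` and `S_n^{n-1} = ∑_j ∏_{m ≠ j} x_m`, grouping the summands of `S_n^{n-1}`
in consecutive pairs `{2i, 2i+1}` turns each pair into `(x_{2i} + x_{2i+1}) ∏_{m ≠ 2i, 2i+1} x_m`,
and the last pair absorbs `α S_n^n`. Each of these `k` terms is read-once: a read-once
polynomial in the pair's variables times a monomial in the other, disjoint, variables.
-/

open Finset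

section Esymm

variable {σ R : Type*} [Fintype σ] [CommSemiring R]

theorem esymm_card : esymm σ R (Fintype.card σ) = ∏ i, X i := by
  rw [esymm, ← card_univ, powersetCard_self, sum_singleton]

variable [DecidableEq σ]

theorem powersetCard_card_sub_one_univ [Nonempty σ] :
    powersetCard (Fintype.card σ - 1) (univ : Finset σ) = univ.image (univ.erase ·) := by
  ext t
  simp only [mem_powersetCard, subset_univ, true_and, mem_image, mem_univ]
  constructor
  · intro ht
    obtain ⟨i, hi⟩ : ∃ i, i ∉ t := by
      by_contra! h
      rw [eq_univ_iff_forall.2 h, card_univ] at ht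
      have := Fintype.card_pos (α := σ)
      omega
    refine ⟨i, (eq_of_subset_of_card_le (subset_erase.2 ⟨subset_univ t, hi⟩) ?_).symm⟩
    rw [card_erase_of_mem (mem_univ i), card_univ, ht]
  · rintro ⟨i, rfl⟩
    rw [card_erase_of_mem (mem_univ i), card_univ]

theorem esymm_card_sub_one [Nonempty σ] :
    esymm σ R (Fintype.card σ - 1) = ∑ i, ∏ j ∈ univ.erase i, X j := by
  rw [esymm, powersetCard_card_sub_one_univ, sum_image fun i _ j _ => (erase_injOn univ)
    (mem_univ i) (mem_univ j)]

end Esymm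

theorem Finset.add_mul_prod_erase_erase {ι R : Type*} [CommSemiring R] [DecidableEq ι]
    {s : Finset ι} {a b : ι} (ha : a ∈ s) (hb : b ∈ s) (hab : a ≠ b) (f : ι → R) :
    (f a + f b) * ∏ x ∈ (s.erase a).erase b, f x
      = ∏ x ∈ s.erase b, f x + ∏ x ∈ s.erase a, f x := by
  rw [add_mul, mul_prod_erase _ _ (mem_erase.2 ⟨hab.symm, hb⟩), erase_right_comm,
    mul_prod_erase _ _ (mem_erase.2 ⟨hab, ha⟩)]

theorem Finset.mul_mul_prod_erase_erase {ι M : Type*} [CommMonoid M] [DecidableEq ι]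
    {s : Finset ι} {a b : ι} (ha : a ∈ s) (hb : b ∈ s) (hab : a ≠ b) (f : ι → M) :
    f a * f b * ∏ x ∈ (s.erase a).erase b, f x = ∏ x ∈ s, f x := by
  rw [mul_assoc, mul_prod_erase _ _ (mem_erase.2 ⟨hab.symm, hb⟩), mul_prod_erase _ _ ha]

section FinFilter

variable {R : Type*} [CommSemiring R] {n : ℕ}

theorem Fin.filter_val_ne (j : Fin n) :
    univ.filter (fun m : Fin n => m.1 ≠ j.1) = univ.erase j := by
  ext m
  simp [Fin.val_ne_iff]

theorem Fin.filter_val_ne_and_val_ne (a b : Fin n) :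
    univ.filter (fun m : Fin n => m.1 ≠ a.1 ∧ m.1 ≠ b.1) = (univ.erase a).erase b := by
  ext m
  simp [Fin.val_ne_iff, and_comm]

theorem X_add_X_mul_prod_filter {a b : ℕ} (ha : a < n) (hb : b < n) (hab : a ≠ b) :
    (X ⟨a, ha⟩ + X ⟨b, hb⟩) * ∏ m ∈ univ.filter (fun m : Fin n => m.1 ≠ a ∧ m.1 ≠ b), X (R := R) m
      = ∏ m ∈ univ.filter (fun m : Fin n => m.1 ≠ b), X m
        + ∏ m ∈ univ.filter (fun m : Fin n => m.1 ≠ a), X m := by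
  rw [Fin.filter_val_ne_and_val_ne ⟨a, ha⟩ ⟨b, hb⟩, Fin.filter_val_ne ⟨a, ha⟩,
    Fin.filter_val_ne ⟨b, hb⟩]
  exact add_mul_prod_erase_erase (mem_univ _) (mem_univ _) (Fin.ne_of_val_ne hab) X

theorem C_mul_X_add_C_mul_X_add_C_mul_X_mul_X_mul_prod_filter {a b : ℕ} (ha : a < n) (hb : b < n)
    (hab : a ≠ b) (α β : R) :
    (C β * X ⟨a, ha⟩ + C β * X ⟨b, hb⟩ + C α * X ⟨a, ha⟩ * X ⟨b, hb⟩)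
        * ∏ m ∈ univ.filter (fun m : Fin n => m.1 ≠ a ∧ m.1 ≠ b), X m
      = C β * (∏ m ∈ univ.filter (fun m : Fin n => m.1 ≠ b), X m
          + ∏ m ∈ univ.filter (fun m : Fin n => m.1 ≠ a), X m) + C α * ∏ m, X m := by
  have hprod : X ⟨a, ha⟩ * X ⟨b, hb⟩
      * ∏ m ∈ univ.filter (fun m : Fin n => m.1 ≠ a ∧ m.1 ≠ b), X m = ∏ m, X (R := R) m := by
    rw [Fin.filter_val_ne_and_val_ne ⟨a, ha⟩ ⟨b, hb⟩]
    exact mul_mul_prod_erase_erase (mem_univ _) (mem_univ _) (Fin.ne_of_val_ne hab) X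
  rw [← hprod, ← X_add_X_mul_prod_filter ha hb hab]
  ring

end FinFilter

section Esym

variable {F : Type*} [Field F] {n : ℕ}

theorem esym_eq_esymm (k : ℕ) : esym (F := F) n k = esymm (Fin n) F k := rfl

theorem esym_self : esym (F := F) n n = ∏ m, X m := by
  simpa [esym_eq_esymm] using esymm_card (σ := Fin n) (R := F)

theorem esym_sub_one (hn : 1 ≤ n) :
    esym (F := F) n (n - 1) = ∑ j ∈ range n, ∏ m ∈ univ.filter (fun m : Fin n => m.1 ≠ j), X m := by
  have : NeZero n := ⟨by omega⟩
  rw [← Fin.sum_univ_eq_sum_range (fun j => ∏ m ∈ univ.filter (fun m : Fin n => m.1 ≠ j), X m)]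
  simpa only [esym_eq_esymm, Fintype.card_fin, Fin.filter_val_ne] using
    esymm_card_sub_one (σ := Fin n) (R := F)

end Esym

theorem Finset.sum_range_two_mul {M : Type*} [AddCommMonoid M] (g : ℕ → M) (k : ℕ) :
    ∑ j ∈ range (2 * k), g j = ∑ i ∈ range k, (g (2 * i + 1) + g (2 * i)) := by
  induction k with
  | zero => simp
  | succ k ih => rw [mul_add, sum_range_succ, sum_range_succ, sum_range_succ, ih,
      add_assoc, add_comm (g _)]

theorem Finset.sum_range_two_mul_eq_sum_fin_add {M : Type*} [AddCommMonoid M] (g : ℕ → M)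
    {k : ℕ} (hk : 1 ≤ k) :
    ∑ j ∈ range (2 * k), g j
      = ∑ i : Fin (k - 1), (g (2 * i + 1) + g (2 * i)) + (g (2 * k - 1) + g (2 * k - 2)) := by
  obtain ⟨k, rfl⟩ := Nat.exists_eq_add_of_le' hk
  rw [sum_range_two_mul, sum_range_succ, Nat.add_sub_cancel,
    Fin.sum_univ_eq_sum_range (fun i => g (2 * i + 1) + g (2 * i))]
  congr 3

section ReadOnce

variable {F : Type*} [Field F] {n : ℕ} {f g : MvPolynomial (Fin n) F}

theorem IsROP.affine (c d : F) (hf : IsROP f) : IsROP (C c * f + C d) := by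
  cases hf with
  | leaf a b i =>
    convert IsROP.leaf (c * a) (c * b + d) i using 1; simp only [map_mul, map_add]; ring
  | add a b hdisj hf hg =>
    convert IsROP.add (c * a) (c * b + d) hdisj hf hg using 1; simp only [map_mul, map_add]; ring
  | mul a b hdisj hf hg =>
    convert IsROP.mul (c * a) (c * b + d) hdisj hf hg using 1; simp only [map_mul, map_add]; ring

theorem IsROP.C_mul (c : F) (hf : IsROP f) : IsROP (C c * f) := by
  simpa using hf.affine c 0

theorem isROP_X (i : Fin n) : IsROP (X (R := F) i) := by
  simpa using IsROP.leaf (1 : F) 0 i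

theorem IsROP.add_of_disjoint (hf : IsROP f) (hg : IsROP g) (h : Disjoint f.vars g.vars) :
    IsROP (f + g) := by
  simpa using IsROP.add (1 : F) 0 h hf hg

theorem IsROP.mul_of_disjoint (hf : IsROP f) (hg : IsROP g) (h : Disjoint f.vars g.vars) :
    IsROP (f * g) := by
  simpa using IsROP.mul (1 : F) 0 h hf hg

theorem IsROP.mul_prod_X (hf : IsROP f) {S : Finset (Fin n)} (hS : Disjoint f.vars S) :
    IsROP (f * ∏ m ∈ S, X m) := by
  induction S using Finset.induction_on generalizing f with
  | empty => simpa using hf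
  | insert a S haS ih =>
    obtain ⟨haf, hfS⟩ := disjoint_insert_right.1 hS
    rw [prod_insert haS, ← mul_assoc]
    refine ih (hf.mul_of_disjoint (isROP_X a) (by simpa [vars_X]))
      (disjoint_of_subset_left (vars_mul _ _) ?_)
    rw [vars_X, disjoint_union_left]
    exact ⟨hfS, disjoint_singleton_left.2 haS⟩

theorem disjoint_vars_of_mem_supported {T S : Finset (Fin n)} (hf : f ∈ supported F (T : Set _))
    (hTS : Disjoint T S) : Disjoint f.vars S :=
  hTS.mono_left (by exact_mod_cast mem_supported.1 hf)

theorem isROP_X_add_X {a b : Fin n} (hab : a ≠ b) : IsROP (X a + X (R := F) b) :=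
  (isROP_X a).add_of_disjoint (isROP_X b) (by simpa [vars_X])

-- `β x + β y + α x y = α (x + β/α) (y + β/α) - β²/α` when `α ≠ 0`.
theorem isROP_C_mul_X_add_C_mul_X_add_C_mul_X_mul_X {a b : Fin n} (hab : a ≠ b) (α β : F) :
    IsROP (C β * X a + C β * X b + C α * X a * X b) := by
  by_cases hα : α = 0
  · simpa [hα, mul_add] using (isROP_X_add_X (F := F) hab).C_mul β
  · obtain ⟨c, rfl⟩ : ∃ c, β = α * c := ⟨β / α, by field_simp⟩
    have hdisj : Disjoint (C 1 * X a + C c).vars (C 1 * X b + C c).vars := by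
      rw [vars_add_of_disjoint (by simp), vars_add_of_disjoint (by simp)]
      simpa [vars_X]
    convert IsROP.mul α (-(α * c ^ 2)) hdisj (.leaf 1 c a) (.leaf 1 c b) using 1
    simp only [map_one, one_mul, map_neg, map_mul, map_pow]
    ring

theorem isROP_C_mul_X_add_X_mul_prod {a b : Fin n} (hab : a ≠ b) {S : Finset (Fin n)}
    (haS : a ∉ S) (hbS : b ∉ S) (β : F) : IsROP (C β * ((X a + X b) * ∏ m ∈ S, X m)) := by
  refine ((isROP_X_add_X hab).mul_prod_X
    (disjoint_vars_of_mem_supported (T := {a, b}) ?_ ?_)).C_mul β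
  · exact add_mem (X_mem_supported.2 (by simp)) (X_mem_supported.2 (by simp))
  · simp [haS, hbS]

theorem isROP_C_mul_X_add_C_mul_X_add_C_mul_X_mul_X_mul_prod {a b : Fin n} (hab : a ≠ b)
    {S : Finset (Fin n)} (haS : a ∉ S) (hbS : b ∉ S) (α β : F) :
    IsROP ((C β * X a + C β * X b + C α * X a * X b) * ∏ m ∈ S, X m) := by
  refine (isROP_C_mul_X_add_C_mul_X_add_C_mul_X_mul_X hab α β).mul_prod_X
    (disjoint_vars_of_mem_supported (T := {a, b}) ?_ ?_)
  · let T : Set (Fin n) := (({a, b} : Finset (Fin n)) : Set (Fin n))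
    have hC (c : F) : C c ∈ supported F T := Subalgebra.algebraMap_mem _ c
    have hX {i} (hi : i = a ∨ i = b) : X i ∈ supported F T := X_mem_supported.2 (by simpa [T])
    exact add_mem (add_mem (mul_mem (hC β) (hX (.inl rfl))) (mul_mem (hC β) (hX (.inr rfl))))
      (mul_mem (mul_mem (hC α) (hX (.inl rfl))) (hX (.inr rfl)))
  · simp [haS, hbS]

end ReadOnce

theorem List.exists_forall_sum_eq_sum_add_length_le {M : Type*} [AddCommMonoid M]
    {p : M → Prop} {m n : ℕ} {t : Fin m → M} {u : M} (hmn : m + 1 ≤ n) (ht : ∀ i, p (t i))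
    (hu : p u) : ∃ L : List M, (∀ q ∈ L, p q) ∧ L.sum = ∑ i, t i + u ∧ L.length ≤ n := by
  refine ⟨List.ofFn t ++ [u], ?_, by simp [List.sum_ofFn], by simpa using hmn⟩
  simp only [List.mem_append, List.mem_ofFn, List.mem_singleton]
  rintro q (⟨i, rfl⟩ | rfl)
  exacts [ht i, hu]

theorem stmt15 {F : Type*} [Field F] (k : ℕ) (hk : 1 ≤ k) (α β : F) :
    (C α * esym (2 * k) (2 * k) + C β * esym (2 * k) (2 * k - 1)
      = C β * ∑ i : Fin (k - 1),
          ((X (⟨2 * i.1, by have := i.2; omega⟩ : Fin (2 * k))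
            + X (⟨2 * i.1 + 1, by have := i.2; omega⟩ : Fin (2 * k)))
            * ∏ m ∈ Finset.univ.filter
                (fun m : Fin (2 * k) => m.1 ≠ 2 * i.1 ∧ m.1 ≠ 2 * i.1 + 1), X m)
        + (C β * X (⟨2 * k - 2, by omega⟩ : Fin (2 * k))
            + C β * X (⟨2 * k - 1, by omega⟩ : Fin (2 * k))
            + C α * X (⟨2 * k - 2, by omega⟩ : Fin (2 * k))
                * X (⟨2 * k - 1, by omega⟩ : Fin (2 * k)))
          * ∏ m ∈ Finset.univ.filter
              (fun m : Fin (2 * k) => m.1 ≠ 2 * k - 2 ∧ m.1 ≠ 2 * k - 1), X m)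
    ∧ ∃ L : List (MvPolynomial (Fin (2 * k)) F),
        (∀ q ∈ L, IsROP q) ∧
        L.sum = C α * esym (2 * k) (2 * k) + C β * esym (2 * k) (2 * k - 1) ∧
        L.length ≤ k := by
  refine (and_iff_left_of_imp fun hsum => ?_).mpr ?_
  · rw [hsum, mul_sum]
    exact List.exists_forall_sum_eq_sum_add_length_le (by omega)
      (fun i => isROP_C_mul_X_add_X_mul_prod (by simp [Fin.ext_iff]) (by simp) (by simp) β)
      (isROP_C_mul_X_add_C_mul_X_add_C_mul_X_mul_X_mul_prod (by simp [Fin.ext_iff]; omega)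
        (by simp) (by simp) α β)
  · rw [esym_self, esym_sub_one (by omega), sum_range_two_mul_eq_sum_fin_add _ hk,
      C_mul_X_add_C_mul_X_add_C_mul_X_mul_X_mul_prod_filter _ _ (by omega),
      sum_congr rfl fun i _ => X_add_X_mul_prod_filter _ _ (by omega)]
    ring
end
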